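/- arXiv:2411.01217 — 3 statements merged into one kernel-verified Lean document; each statement's English description precedes it below -/
import Mathlib

section
/- In a two-player zero-sum finite game, if each player's average external regret after T rounds is at most ε, i.e., max_a (1/T) Σ_{t=1}^T (u^i(a, σ_t^{-i}) - u^i(σ_t)) ≤ ε for i = 1,2, then the profile of average strategies (σ̄_T^1, σ̄_T^2) is a 2ε-Nash equilibrium. -/
open Finset

/-- Bilinear expected payoff of player 1 in a two-player game with pure payoff
matrix `u`, given mixed strategies `σ1, σ2`. -/
noncomputable def biPayoff {A1 A2 : Type*} [Fintype A1] [Fintype A2]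
    (u : A1 → A2 → ℝ) (σ1 : A1 → ℝ) (σ2 : A2 → ℝ) : ℝ :=
  ∑ a : A1, ∑ b : A2, σ1 a * σ2 b * u a b

/-!
Let `V` be the average realized payoff of player 1. By linearity, player 1's regret bound says
that every pure strategy earns at most `V + ε` against `σ̄²`, and player 2's says that every pure
strategy of player 2 concedes at least `V - ε` against `σ̄¹`. Averaging these pure bounds over
`σ̄¹`, resp. `σ̄²`, squeezes the payoff of `(σ̄¹, σ̄²)` into `[V - ε, V + ε]`, so no deviation
gains either player more than `2ε`.
-/

section StdSimplex

variable {ι α : Type*} [Fintype α]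

theorem sum_mul_le_of_mem_stdSimplex {σ : α → ℝ} (hσ : σ ∈ stdSimplex ℝ α) {f : α → ℝ} {c : ℝ}
    (hf : ∀ a, f a ≤ c) : ∑ a, σ a * f a ≤ c :=
  calc ∑ a, σ a * f a ≤ ∑ a, σ a * c :=
        sum_le_sum fun a _ => mul_le_mul_of_nonneg_left (hf a) (hσ.1 a)
    _ = c := by rw [← sum_mul, hσ.2, one_mul]

theorem le_sum_mul_of_mem_stdSimplex {σ : α → ℝ} (hσ : σ ∈ stdSimplex ℝ α) {f : α → ℝ} {c : ℝ}
    (hf : ∀ a, c ≤ f a) : c ≤ ∑ a, σ a * f a :=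
  calc c = ∑ a, σ a * c := by rw [← sum_mul, hσ.2, one_mul]
    _ ≤ ∑ a, σ a * f a := sum_le_sum fun a _ => mul_le_mul_of_nonneg_left (hf a) (hσ.1 a)

theorem average_mem_stdSimplex {s : Finset ι} (hs : s.Nonempty) {σ : ι → α → ℝ}
    (hσ : ∀ t ∈ s, σ t ∈ stdSimplex ℝ α) :
    (fun a => 1 / (#s : ℝ) * ∑ t ∈ s, σ t a) ∈ stdSimplex ℝ α := by
  have hweights : ∑ _t ∈ s, 1 / (#s : ℝ) = 1 := by
    rw [sum_const, nsmul_eq_mul, mul_one_div_cancel (by exact_mod_cast hs.card_ne_zero)]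
  convert (convex_stdSimplex ℝ α).sum_mem (fun _ _ => by positivity) hweights hσ using 1
  ext a
  rw [Finset.sum_apply, mul_sum]
  rfl

theorem sum_average_mul (c : ℝ) (s : Finset ι) (σ : ι → α → ℝ) (w : α → ℝ) :
    ∑ a, (c * ∑ t ∈ s, σ t a) * w a = c * ∑ t ∈ s, ∑ a, σ t a * w a := by
  simp only [mul_sum, sum_mul, mul_assoc]
  exact sum_comm

end StdSimplex

section Payoff

variable {A1 A2 : Type*} [Fintype A1] [Fintype A2]

theorem biPayoff_eq_sum_mul_row (u : A1 → A2 → ℝ) (σ1 : A1 → ℝ) (σ2 : A2 → ℝ) :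
    biPayoff u σ1 σ2 = ∑ a, σ1 a * ∑ b, σ2 b * u a b := by
  simp only [biPayoff, mul_sum, mul_assoc]

theorem biPayoff_eq_sum_mul_col (u : A1 → A2 → ℝ) (σ1 : A1 → ℝ) (σ2 : A2 → ℝ) :
    biPayoff u σ1 σ2 = ∑ b, σ2 b * ∑ a, σ1 a * u a b := by
  rw [biPayoff, sum_comm]
  simp only [mul_sum]
  exact sum_congr rfl fun b _ => sum_congr rfl fun a _ => by ring

theorem biPayoff_neg (u : A1 → A2 → ℝ) (σ1 : A1 → ℝ) (σ2 : A2 → ℝ) :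
    biPayoff (fun a b => -u a b) σ1 σ2 = -biPayoff u σ1 σ2 := by
  simp only [biPayoff, mul_neg, sum_neg_distrib]

theorem col_regret_neg (u : A1 → A2 → ℝ) (σ1 : A1 → ℝ) (σ2 : A2 → ℝ) (b : A2) :
    (∑ a, σ1 a * (-u a b)) - biPayoff (fun a b => -u a b) σ1 σ2 =
      biPayoff u σ1 σ2 - ∑ a, σ1 a * u a b := by
  simp only [biPayoff_neg, mul_neg, sum_neg_distrib]
  ring

end Payoff

theorem avg_regret_le_implies_2eps_nash_general
    {A1 A2 : Type*} [Fintype A1] [Fintype A2]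
    (u : A1 → A2 → ℝ) (ε : ℝ) (T : ℕ) (hT : 1 ≤ T)
    (σ1 : ℕ → A1 → ℝ) (σ2 : ℕ → A2 → ℝ)
    (hσ1 : ∀ t, (∀ a, 0 ≤ σ1 t a) ∧ ∑ a, σ1 t a = 1)
    (hσ2 : ∀ t, (∀ b, 0 ≤ σ2 t b) ∧ ∑ b, σ2 t b = 1)
    (hreg1 : ∀ a : A1,
      (1 / (T : ℝ)) * ∑ t ∈ Finset.Icc 1 T,
        ((∑ b, σ2 t b * u a b) - biPayoff u (σ1 t) (σ2 t)) ≤ ε)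
    (hreg2 : ∀ b : A2,
      (1 / (T : ℝ)) * ∑ t ∈ Finset.Icc 1 T,
        ((∑ a, σ1 t a * (-u a b)) - biPayoff (fun a b => -u a b) (σ1 t) (σ2 t)) ≤ ε) :
    let σ1bar : A1 → ℝ := fun a => (1 / (T : ℝ)) * ∑ t ∈ Finset.Icc 1 T, σ1 t a
    let σ2bar : A2 → ℝ := fun b => (1 / (T : ℝ)) * ∑ t ∈ Finset.Icc 1 T, σ2 t b
    (∀ a : A1, (∑ b, σ2bar b * u a b) - biPayoff u σ1bar σ2bar ≤ 2 * ε) ∧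
    (∀ b : A2, (∑ a, σ1bar a * (-u a b)) - biPayoff (fun a b => -u a b) σ1bar σ2bar ≤ 2 * ε) := by
  intro σ1bar σ2bar
  set V := 1 / (T : ℝ) * ∑ t ∈ Icc 1 T, biPayoff u (σ1 t) (σ2 t)
  have hs : (Icc 1 T).Nonempty := nonempty_Icc.2 hT
  have hcard : (#(Icc 1 T) : ℝ) = T := by simp
  have hσ1bar : σ1bar ∈ stdSimplex ℝ A1 := by
    simpa only [hcard] using average_mem_stdSimplex hs fun t _ => hσ1 t
  have hσ2bar : σ2bar ∈ stdSimplex ℝ A2 := by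
    simpa only [hcard] using average_mem_stdSimplex hs fun t _ => hσ2 t
  have hrow : ∀ a, ∑ b, σ2bar b * u a b ≤ V + ε := fun a => by
    have h := hreg1 a
    rw [sum_sub_distrib, mul_sub, ← sum_average_mul] at h
    linarith
  have hcol : ∀ b, V - ε ≤ ∑ a, σ1bar a * u a b := fun b => by
    have h := hreg2 b
    simp only [col_regret_neg] at h
    rw [sum_sub_distrib, mul_sub, ← sum_average_mul] at h
    linarith
  have hup : biPayoff u σ1bar σ2bar ≤ V + ε :=
    biPayoff_eq_sum_mul_row u σ1bar σ2bar ▸ sum_mul_le_of_mem_stdSimplex hσ1bar hrow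
  have hlow : V - ε ≤ biPayoff u σ1bar σ2bar :=
    biPayoff_eq_sum_mul_col u σ1bar σ2bar ▸ le_sum_mul_of_mem_stdSimplex hσ2bar hcol
  refine ⟨fun a => by linarith [hrow a], fun b => ?_⟩
  rw [col_regret_neg]
  linarith [hcol b]

/-- In a two-player zero-sum finite game (player 2's payoff is `-u`), if each
player's average external regret after `T` rounds is at most `ε`, then the profile
of average strategies is a `2ε`-Nash equilibrium: each player's exploitability at
the average profile is at most `2ε`. -/
theorem avg_regret_le_implies_2eps_nash
    {A1 A2 : Type*} [Fintype A1] [Fintype A2] [Nonempty A1] [Nonempty A2]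
    (u : A1 → A2 → ℝ) (ε : ℝ) (T : ℕ) (hT : 1 ≤ T)
    (σ1 : ℕ → A1 → ℝ) (σ2 : ℕ → A2 → ℝ)
    (hσ1 : ∀ t, (∀ a, 0 ≤ σ1 t a) ∧ ∑ a, σ1 t a = 1)
    (hσ2 : ∀ t, (∀ b, 0 ≤ σ2 t b) ∧ ∑ b, σ2 t b = 1)
    (hreg1 : ∀ a : A1,
      (1 / (T : ℝ)) * ∑ t ∈ Finset.Icc 1 T,
        ((∑ b, σ2 t b * u a b) - biPayoff u (σ1 t) (σ2 t)) ≤ ε)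
    (hreg2 : ∀ b : A2,
      (1 / (T : ℝ)) * ∑ t ∈ Finset.Icc 1 T,
        ((∑ a, σ1 t a * (-u a b)) - biPayoff (fun a b => -u a b) (σ1 t) (σ2 t)) ≤ ε) :
    let σ1bar : A1 → ℝ := fun a => (1 / (T : ℝ)) * ∑ t ∈ Finset.Icc 1 T, σ1 t a
    let σ2bar : A2 → ℝ := fun b => (1 / (T : ℝ)) * ∑ t ∈ Finset.Icc 1 T, σ2 t b
    (∀ a : A1, (∑ b, σ2bar b * u a b) - biPayoff u σ1bar σ2bar ≤ 2 * ε) ∧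
    (∀ b : A2, (∑ a, σ1bar a * (-u a b)) - biPayoff (fun a b => -u a b) σ1bar σ2bar ≤ 2 * ε) :=
  avg_regret_le_implies_2eps_nash_general u ε T hT σ1 σ2 hσ1 hσ2 hreg1 hreg2
end

section
/- (Regret matching step inequality) Suppose at each round t a learner with d actions plays σ_t = R̄_{t-1}^+/‖R̄_{t-1}^+‖₁ when R̄_{t-1}^+ ≠ 0 (arbitrary otherwise), receiving payoff vector ℓ_t ∈ [0, L]^d, with cumulative regret R_T = Σ_{t=1}^T (ℓ_t - ⟨ℓ_t, σ_t⟩·1). Then ‖R_T^+‖₂² ≤ ‖R_{T-1}^+‖₂² + ‖ℓ_T - ⟨ℓ_T, σ_T⟩·1‖₂², and hence ‖R_T^+‖₂ ≤ L√(d·T). -/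
/-!
Write `x⁺` for the positive part and `r_t = ℓ_t − ⟨ℓ_t, σ_t⟩·1` for the instantaneous regret.
Since `(x + r)⁺ ≤ |x⁺ + r|` coordinatewise, `‖(x + r)⁺‖² ≤ ‖x⁺‖² + 2⟨x⁺, r⟩ + ‖r‖²`.
Regret matching plays `σ_t ∝ R_{t−1}⁺`, which makes `⟨R_{t−1}⁺, r_t⟩ = 0`, so each round adds
at most `‖r_t‖² ≤ d L²` to `‖R⁺‖²`; summing over `T` rounds gives `‖R_T⁺‖ ≤ L √(d T)`.
-/

open Finset

lemma sq_max_add_zero_le (x r : ℝ) : max (x + r) 0 ^ 2 ≤ (max x 0 + r) ^ 2 := by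
  rcases le_or_gt (x + r) 0 with h | h
  · simpa [max_eq_right h] using sq_nonneg (max x 0 + r)
  · rw [max_eq_left h.le]
    exact pow_le_pow_left₀ h.le (by linarith [le_max_left x 0]) 2

lemma weighted_sum_mem_Icc {ι : Type*} [Fintype ι] {L : ℝ} {ℓ σ : ι → ℝ}
    (hℓ : ∀ j, ℓ j ∈ Set.Icc 0 L) (hσ : (∀ j, 0 ≤ σ j) ∧ ∑ j, σ j = 1) :
    ∑ k, ℓ k * σ k ∈ Set.Icc 0 L := by
  refine ⟨sum_nonneg fun k _ => mul_nonneg (hℓ k).1 (hσ.1 k), ?_⟩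
  calc ∑ k, ℓ k * σ k ≤ ∑ k, L * σ k :=
        sum_le_sum fun k _ => mul_le_mul_of_nonneg_right (hℓ k).2 (hσ.1 k)
    _ = L := by rw [← mul_sum, hσ.2, mul_one]

lemma sum_sq_sub_weighted_sum_le {ι : Type*} [Fintype ι] {L : ℝ} {ℓ σ : ι → ℝ}
    (hℓ : ∀ j, ℓ j ∈ Set.Icc 0 L) (hσ : (∀ j, 0 ≤ σ j) ∧ ∑ j, σ j = 1) :
    ∑ j, (ℓ j - ∑ k, ℓ k * σ k) ^ 2 ≤ Fintype.card ι * L ^ 2 := by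
  obtain ⟨hc₀, hcL⟩ := weighted_sum_mem_Icc hℓ hσ
  calc ∑ j, (ℓ j - ∑ k, ℓ k * σ k) ^ 2 ≤ ∑ _j : ι, L ^ 2 := sum_le_sum fun j _ => by
        rw [← sq_abs]
        exact pow_le_pow_left₀ (abs_nonneg _)
          (abs_sub_le_of_nonneg_of_le (hℓ j).1 (hℓ j).2 hc₀ hcL) 2
    _ = Fintype.card ι * L ^ 2 := by simp

lemma sum_max_zero_mul_regret_eq_zero {ι : Type*} [Fintype ι] (x ℓ σ : ι → ℝ)
    (hσ : (fun j => max (x j) 0) ≠ 0 → σ = fun j => max (x j) 0 / ∑ k, max (x k) 0) :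
    ∑ j, max (x j) 0 * (ℓ j - ∑ k, ℓ k * σ k) = 0 := by
  by_cases hx : (fun j => max (x j) 0) = 0
  · simp [congrFun hx]
  have hS : ∑ k, max (x k) 0 ≠ 0 := by
    obtain ⟨j, hj⟩ := Function.ne_iff.mp hx
    refine (lt_of_lt_of_le ((le_max_right _ _).lt_of_ne' hj) ?_).ne'
    exact single_le_sum (f := fun k => max (x k) 0) (fun k _ => le_max_right _ _) (mem_univ j)
  simp only [hσ hx, mul_sub, sum_sub_distrib, ← sum_mul, ← mul_div_assoc, ← sum_div]
  rw [mul_div_cancel_left₀ _ hS, sub_eq_zero]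
  exact sum_congr rfl fun j _ => mul_comm _ _

lemma sum_sq_max_add_zero_le {ι : Type*} [Fintype ι] (x r : ι → ℝ)
    (hforce : ∑ j, max (x j) 0 * r j ≤ 0) :
    ∑ j, max (x j + r j) 0 ^ 2 ≤ ∑ j, max (x j) 0 ^ 2 + ∑ j, r j ^ 2 := by
  have hexpand : ∑ j, (max (x j) 0 + r j) ^ 2
      = ∑ j, max (x j) 0 ^ 2 + 2 * ∑ j, max (x j) 0 * r j + ∑ j, r j ^ 2 := by
    rw [mul_sum, ← sum_add_distrib, ← sum_add_distrib]
    exact sum_congr rfl fun j _ => by ring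
  have := sum_le_sum fun j (_ : j ∈ univ) => sq_max_add_zero_le (x j) (r j)
  linarith

lemma le_mul_of_succ_le_add {a : ℕ → ℝ} {b : ℝ} (h₀ : a 0 ≤ 0)
    (hsucc : ∀ n, a (n + 1) ≤ a n + b) (n : ℕ) : a n ≤ b * n := by
  induction n with
  | zero => simpa using h₀
  | succ n ih => push_cast; linarith [hsucc n]

theorem regret_matching_step_general (d : ℕ) (L : ℝ) (hL : 0 ≤ L)
    (ℓ σ : ℕ → Fin d → ℝ)
    (hℓ : ∀ t j, ℓ t j ∈ Set.Icc (0 : ℝ) L)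
    (hσ : ∀ t, (∀ j, 0 ≤ σ t j) ∧ ∑ j, σ t j = 1)
    (R : ℕ → Fin d → ℝ)
    (hR : ∀ T j, R T j = ∑ t ∈ Finset.Icc 1 T, (ℓ t j - ∑ k, ℓ t k * σ t k))
    (hrm : ∀ t, 1 ≤ t → (fun j => max (R (t - 1) j) 0) ≠ 0 →
      σ t = fun j => max (R (t - 1) j) 0 / ∑ k, max (R (t - 1) k) 0) :
    ∀ T, 1 ≤ T →
      (∑ j, (max (R T j) 0) ^ 2 ≤
        ∑ j, (max (R (T - 1) j) 0) ^ 2 + ∑ j, (ℓ T j - ∑ k, ℓ T k * σ T k) ^ 2) ∧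
      Real.sqrt (∑ j, (max (R T j) 0) ^ 2) ≤ L * Real.sqrt (d * T) := by
  have hstep : ∀ n, ∑ j, max (R (n + 1) j) 0 ^ 2 ≤
      ∑ j, max (R n j) 0 ^ 2 + ∑ j, (ℓ (n + 1) j - ∑ k, ℓ (n + 1) k * σ (n + 1) k) ^ 2 := by
    intro n
    simp only [hR n, hR (n + 1), sum_Icc_succ_top (Nat.le_add_left 1 n)]
    refine sum_sq_max_add_zero_le _ _ (sum_max_zero_mul_regret_eq_zero _ _ _ ?_).le
    simpa only [hR, Nat.add_sub_cancel] using hrm (n + 1) (Nat.le_add_left 1 n)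
  have hbound : ∀ T, ∑ j, max (R T j) 0 ^ 2 ≤ d * L ^ 2 * T :=
    le_mul_of_succ_le_add (by simp [hR]) fun n => by
      have := sum_sq_sub_weighted_sum_le (hℓ (n + 1)) (hσ (n + 1))
      rw [Fintype.card_fin] at this
      linarith [hstep n]
  intro T hT
  obtain ⟨n, rfl⟩ : ∃ n, T = n + 1 := ⟨T - 1, by omega⟩
  refine ⟨hstep n, Real.sqrt_le_iff.mpr ⟨by positivity, ?_⟩⟩
  rw [mul_pow, Real.sq_sqrt (by positivity)]
  linarith [hbound (n + 1)]

/-- Regret matching step inequality: a learner with `d` actions plays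
`σ_t = R_{t−1}⁺/‖R_{t−1}⁺‖₁` whenever `R_{t−1}⁺ ≠ 0`, receives payoff vectors
`ℓ_t ∈ [0,L]^d`, and accumulates regret
`R_T = Σ_{t=1}^T (ℓ_t − ⟨ℓ_t, σ_t⟩·1)`.  Then
`‖R_T⁺‖₂² ≤ ‖R_{T−1}⁺‖₂² + ‖ℓ_T − ⟨ℓ_T, σ_T⟩·1‖₂²`, and hence
`‖R_T⁺‖₂ ≤ L·√(d·T)`. -/
theorem regret_matching_step (d : ℕ) (hd : 1 ≤ d) (L : ℝ) (hL : 0 ≤ L)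
    (ℓ σ : ℕ → Fin d → ℝ)
    (hℓ : ∀ t j, ℓ t j ∈ Set.Icc (0 : ℝ) L)
    (hσ : ∀ t, (∀ j, 0 ≤ σ t j) ∧ ∑ j, σ t j = 1)
    (R : ℕ → Fin d → ℝ)
    (hR : ∀ T j, R T j = ∑ t ∈ Finset.Icc 1 T, (ℓ t j - ∑ k, ℓ t k * σ t k))
    (hrm : ∀ t, 1 ≤ t → (fun j => max (R (t - 1) j) 0) ≠ 0 →
      σ t = fun j => max (R (t - 1) j) 0 / ∑ k, max (R (t - 1) k) 0) :
    ∀ T, 1 ≤ T →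
      (∑ j, (max (R T j) 0) ^ 2 ≤
        ∑ j, (max (R (T - 1) j) 0) ^ 2 + ∑ j, (ℓ T j - ∑ k, ℓ T k * σ T k) ^ 2) ∧
      Real.sqrt (∑ j, (max (R T j) 0) ^ 2) ≤ L * Real.sqrt (d * T) :=
  regret_matching_step_general d L hL ℓ σ hℓ hσ R hR hrm
end

section
/- In Kuhn poker, for every α ∈ [0, 1/3], the parametrized strategy for player 1 (bet with J with probability α at the first decision, bet with Q with probability 0, bet with K with probability 3α, and the corresponding prescribed responses after player 2 bets: fold with J, call with Q with probability α + 1/3, call with K always) achieves the same expected payoff against player 2's unique equilibrium strategy; in particular player 1's expected payoffs are equal for all α in this family. -/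
/-!
The payoff is affine in `α`, since `α` moves three probabilities belonging to different
information sets of player 1: betting with J, betting with K, and calling with Q after
pass–bet. Player 2's equilibrium strategy makes player 1 indifferent at each of these
decisions, so the coefficient of `α` vanishes and every member of the family earns the value
of the game, `-1/18`.
-/

/-- Kuhn poker, cards `0 = J`, `1 = Q`, `2 = K`. Player 1's expected payoff when
playing the `α`-parametrized equilibrium family against player 2's unique
equilibrium strategy.  Each of the two players antes 1; a bet adds 1; the six
deals `(x, y)` with `x ≠ y` are equally likely.

Player 1: bets J with prob `α`, Q with prob `0`, K with prob `3α`; after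
pass–bet, calls with J with prob `0` (fold), with Q with prob `α + 1/3`, with K
always.

Player 2: facing a bet, folds J, calls Q with prob `1/3`, calls K always; after
a pass, bets J with prob `1/3`, checks Q, bets K always. -/
noncomputable def kuhnEV (α : ℝ) : ℝ :=
  let b1 : Fin 3 → ℝ := ![α, 0, 3 * α]          -- P1 bet probability
  let c1 : Fin 3 → ℝ := ![0, α + 1 / 3, 1]      -- P1 call probability after pass–bet
  let c2 : Fin 3 → ℝ := ![0, 1 / 3, 1]          -- P2 call probability facing a bet
  let b2 : Fin 3 → ℝ := ![1 / 3, 0, 1]          -- P2 bet probability after a pass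
  let win : Fin 3 → Fin 3 → ℝ := fun x y => if y < x then 1 else -1
  (1 / 6 : ℝ) * ∑ x : Fin 3, ∑ y : Fin 3,
    if x = y then 0 else
      b1 x * (c2 y * (2 * win x y) + (1 - c2 y) * 1) +
      (1 - b1 x) *
        (b2 y * (c1 x * (2 * win x y) + (1 - c1 x) * (-1)) +
         (1 - b2 y) * win x y)

theorem kuhnEV_eq_neg_one_div_eighteen (α : ℝ) : kuhnEV α = -1 / 18 := by
  simp [kuhnEV, Fin.sum_univ_three]
  ring

/-- In Kuhn poker, every member of player 1's `α`-parametrized family of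
equilibrium strategies, `α ∈ [0, 1/3]`, achieves the same expected payoff
against player 2's unique equilibrium strategy. -/
theorem kuhn_family_payoff_constant :
    ∀ α ∈ Set.Icc (0 : ℝ) (1 / 3), ∀ α' ∈ Set.Icc (0 : ℝ) (1 / 3),
      kuhnEV α = kuhnEV α' := by
  intro α _ α' _
  rw [kuhnEV_eq_neg_one_div_eighteen, kuhnEV_eq_neg_one_div_eighteen]
end
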